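/- Let g(x) = (1/n)∑ᵢ vᵢ ∇fᵢ(x) with τ-nice sampling weights (E[vᵢ²] = n/τ, E[vᵢvⱼ] = n(τ−1)/(τ(n−1)) for i ≠ j). Then E‖g(x)‖² = (n(τ−1)/(τ(n−1)))‖∇f(x)‖² + ((n−τ)/(τ(n−1)))·(1/n)∑ᵢ ‖∇fᵢ(x)‖². -/

import Mathlib

/-!
Expanding the square, `E‖∑ᵢ vᵢ gᵢ‖² = ∑ᵢⱼ E[vᵢvⱼ] ⟪gᵢ, gⱼ⟫`. For τ-nice sampling the matrix of
second moments is `c·J + (a - c)·I` with `a = n/τ` and `c = n(τ-1)/(τ(n-1))`, so the sum splits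
into `c‖∑ᵢ gᵢ‖² + (a - c)∑ᵢ ‖gᵢ‖²`, and `a - c = n(n-τ)/(τ(n-1))`.
-/

open MeasureTheory ProbabilityTheory Finset

section

variable {ι E : Type*} [NormedAddCommGroup E] [InnerProductSpace ℝ E]

lemma norm_sum_smul_sq (s : Finset ι) (w : ι → ℝ) (g : ι → E) :
    ‖∑ i ∈ s, w i • g i‖ ^ 2 = ∑ i ∈ s, ∑ j ∈ s, w i * w j * inner ℝ (g i) (g j) := by
  rw [← real_inner_self_eq_norm_sq, sum_inner]
  simp only [inner_sum, real_inner_smul_left, real_inner_smul_right]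
  exact sum_congr rfl fun i _ ↦ sum_congr rfl fun j _ ↦ by ring

lemma sum_sum_ite_mul_inner [DecidableEq ι] (s : Finset ι) (a c : ℝ) (g : ι → E) :
    ∑ i ∈ s, ∑ j ∈ s, (if i = j then a else c) * inner ℝ (g i) (g j) =
      c * ‖∑ i ∈ s, g i‖ ^ 2 + (a - c) * ∑ i ∈ s, ‖g i‖ ^ 2 := by
  have hsplit : ∀ i j, (if i = j then a else c) * inner ℝ (g i) (g j) =
      c * inner ℝ (g i) (g j) + if j = i then (a - c) * ‖g i‖ ^ 2 else 0 := by
    intro i j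
    by_cases h : i = j
    · subst h
      simp only [if_true, real_inner_self_eq_norm_sq]
      ring
    · simp [h, Ne.symm h]
  rw [← real_inner_self_eq_norm_sq, sum_inner]
  simp only [hsplit, sum_add_distrib, sum_ite_eq', ← mul_sum, inner_sum, sum_ite_mem, inter_self]

variable {Ω : Type*} [MeasurableSpace Ω] {μ : Measure Ω}

lemma integral_norm_sum_smul_sq (s : Finset ι) (v : ι → Ω → ℝ) (hv : ∀ i ∈ s, MemLp (v i) 2 μ)
    (g : ι → E) :
    ∫ ω, ‖∑ i ∈ s, v i ω • g i‖ ^ 2 ∂μ =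
      ∑ i ∈ s, ∑ j ∈ s, (∫ ω, v i ω * v j ω ∂μ) * inner ℝ (g i) (g j) := by
  have hint : ∀ i ∈ s, ∀ j ∈ s, Integrable (fun ω ↦ v i ω * v j ω * inner ℝ (g i) (g j)) μ :=
    fun i hi j hj ↦ ((hv i hi).integrable_mul (hv j hj)).mul_const _
  simp only [norm_sum_smul_sq]
  rw [integral_finsetSum _ fun i hi ↦ integrable_finsetSum _ (hint i hi)]
  refine sum_congr rfl fun i hi ↦ ?_
  rw [integral_finsetSum _ (hint i hi)]
  simp only [integral_mul_const]

end

theorem second_moment_tau_nice_general {Ω : Type*} [MeasureSpace Ω] {d : ℕ}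
    (n τ : ℕ) (hn : 2 ≤ n)
    (f : Fin n → EuclideanSpace ℝ (Fin d) → ℝ)
    (v : Fin n → Ω → ℝ)
    (hv2 : ∀ i, MemLp (v i) 2 ℙ)
    (hsq : ∀ i, ∫ ω, (v i ω) ^ 2 = n / τ)
    (hcross : ∀ i j, i ≠ j → ∫ ω, v i ω * v j ω = n * (τ - 1) / (τ * (n - 1)))
    (x : EuclideanSpace ℝ (Fin d)) :
    ∫ ω, ‖(n : ℝ)⁻¹ • ∑ i, v i ω • gradient (f i) x‖ ^ 2 =
      (n * (τ - 1) / (τ * (n - 1))) * ‖(n : ℝ)⁻¹ • ∑ i, gradient (f i) x‖ ^ 2 +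
        ((n - τ) / (τ * (n - 1))) * ((n : ℝ)⁻¹ * ∑ i, ‖gradient (f i) x‖ ^ 2) := by
  have hn0 : (n : ℝ) ≠ 0 := by positivity
  have hn1 : (n : ℝ) - 1 ≠ 0 := by
    have : (2 : ℝ) ≤ n := by exact_mod_cast hn
    linarith
  have hmoment : ∀ i j, ∫ ω, v i ω * v j ω =
      if i = j then (n / τ : ℝ) else n * (τ - 1) / (τ * (n - 1)) := by
    intro i j
    split_ifs with h
    · subst h
      simpa only [sq] using hsq i
    · exact hcross i j h
  have hgap : (n / τ : ℝ) - n * (τ - 1) / (τ * (n - 1)) = n * ((n - τ) / (τ * (n - 1))) := by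
    rw [mul_div_mul_comm, ← mul_one_sub, one_sub_div hn1, div_mul_div_comm, mul_div_assoc,
      sub_sub_sub_cancel_right]
  have hscale : (n : ℝ)⁻¹ ^ 2 * n = (n : ℝ)⁻¹ := by field_simp
  simp only [norm_smul, mul_pow, norm_inv, Real.norm_natCast]
  rw [integral_const_mul, integral_norm_sum_smul_sq _ _ (fun i _ ↦ hv2 i)]
  simp only [hmoment, sum_sum_ite_mul_inner, hgap]
  linear_combination ((n - τ) / (τ * (n - 1)) * ∑ i, ‖gradient (f i) x‖ ^ 2) * hscale

theorem second_moment_tau_nice {Ω : Type*} [MeasureSpace Ω]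
    [IsProbabilityMeasure (ℙ : Measure Ω)] {d : ℕ}
    (n τ : ℕ) (hn : 2 ≤ n) (hτ1 : 1 ≤ τ) (hτn : τ ≤ n)
    (f : Fin n → EuclideanSpace ℝ (Fin d) → ℝ)
    (hdiff : ∀ i x, DifferentiableAt ℝ (f i) x)
    (v : Fin n → Ω → ℝ)
    (hv2 : ∀ i, MemLp (v i) 2 ℙ)
    (hmean : ∀ i, ∫ ω, v i ω = 1)
    (hsq : ∀ i, ∫ ω, (v i ω) ^ 2 = n / τ)
    (hcross : ∀ i j, i ≠ j → ∫ ω, v i ω * v j ω = n * (τ - 1) / (τ * (n - 1)))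
    (x : EuclideanSpace ℝ (Fin d)) :
    ∫ ω, ‖(n : ℝ)⁻¹ • ∑ i, v i ω • gradient (f i) x‖ ^ 2 =
      (n * (τ - 1) / (τ * (n - 1))) * ‖(n : ℝ)⁻¹ • ∑ i, gradient (f i) x‖ ^ 2 +
        ((n - τ) / (τ * (n - 1))) * ((n : ℝ)⁻¹ * ∑ i, ‖gradient (f i) x‖ ^ 2) :=
  second_moment_tau_nice_general n τ hn f v hv2 hsq hcross x
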